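/- arXiv:1505.05343 — 4 statements merged into one kernel-verified Lean document; each statement's English description precedes it below -/
import Mathlib

section
/- The number of lattice paths from (0,0) to (k,k) using unit steps north (1,0) and east (0,1) that pass through exactly i points of the form (j,j) with j>0 equals i·2^i·C(2k-i, k)/(2k-i), for 1 ≤ i ≤ k. -/
/-!
Classify paths by their length `n`, their number `k` of `(1,0)` steps and their number `i` of
diagonal visits. Removing the last step gives `N(n+1, k+1, i + [n+1 = 2(k+1)]) = N(n, k, i) +
N(n, k+1, i)`, and on the diagonal the two terms agree because `f ↦ !f` (reflection in the
diagonal) preserves visits. The closed form `2^i (2k - n + i) C(n-i, k) / (n-i)` satisfies the same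
recursion by Pascal's rule, so induction on `n` proves it for all endpoints with `k ≤ n ≤ 2k`,
i.e. on or below the diagonal.
-/

/-- Number of `true`s among the first `t` coordinates of `f` (prefix count of north steps). -/
def prefixTrue {m : ℕ} (f : Fin m → Bool) (t : ℕ) : ℕ :=
  (Finset.univ.filter (fun s : Fin m => s.val < t ∧ f s = true)).card

/-- `nPaths k l i` is the number of lattice paths from `(0,0)` to `(k,l)` with unit steps
`(1,0)` and `(0,1)` that pass through exactly `i` diagonal points `(j,j)` with `j > 0`.
A path is encoded as `f : Fin (k+l) → Bool`, `true` meaning a `(1,0)` step. -/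
def nPaths (k l i : ℕ) : ℕ :=
  (Finset.univ.filter (fun f : Fin (k + l) → Bool =>
    prefixTrue f (k + l) = k ∧
    ((Finset.range (k + l + 1)).filter
      (fun t => 0 < t ∧ 2 * prefixTrue f t = t)).card = i)).card

open Finset

lemma card_filter_snoc {n : ℕ} (p : (Fin (n + 1) → Bool) → Prop) [DecidablePred p] :
    #{f | p f} = #{g : Fin n → Bool | p (Fin.snoc g true)} + #{g | p (Fin.snoc g false)} := by
  simp only [card_filter]
  rw [← (Fin.snocEquiv fun _ => Bool).sum_comp, Fintype.sum_prod_type, Fintype.sum_bool]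
  rfl

lemma prefixTrue_eq_sum {m : ℕ} (f : Fin m → Bool) (t : ℕ) :
    prefixTrue f t = ∑ s : Fin m, if s.val < t ∧ f s = true then 1 else 0 :=
  card_filter _ _

lemma prefixTrue_snoc_of_le {n t : ℕ} (g : Fin n → Bool) (b : Bool) (ht : t ≤ n) :
    prefixTrue (Fin.snoc g b) t = prefixTrue g t := by
  rw [prefixTrue_eq_sum, prefixTrue_eq_sum, Fin.sum_univ_castSucc]
  simp [ht.not_gt]

lemma prefixTrue_snoc_last {n : ℕ} (g : Fin n → Bool) (b : Bool) :
    prefixTrue (Fin.snoc g b) (n + 1) = prefixTrue g n + b.toNat := by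
  rw [prefixTrue_eq_sum, prefixTrue_eq_sum, Fin.sum_univ_castSucc]
  cases b <;> simp

lemma prefixTrue_not_add {m t : ℕ} (f : Fin m → Bool) (ht : t ≤ m) :
    prefixTrue (fun s => !f s) t + prefixTrue f t = t := by
  have := card_filter_add_card_filter_not (s := univ.filter fun s : Fin m => s.val < t)
    (fun s => f s = false)
  simp only [filter_filter, Bool.not_eq_false, Fin.card_filter_val_lt, min_eq_right ht] at this
  simpa [prefixTrue] using this

lemma prefixTrue_eq_zero_iff {m : ℕ} (f : Fin m → Bool) :
    prefixTrue f m = 0 ↔ f = fun _ => false := by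
  simp [prefixTrue, filter_eq_empty_iff, funext_iff]

def diagonalVisits {m : ℕ} (f : Fin m → Bool) : ℕ :=
  #{t ∈ range (m + 1) | 0 < t ∧ 2 * prefixTrue f t = t}

-- Indexed by the length `n` rather than the endpoint, so that a path of length `n + 1` is a
-- `Fin.snoc` of one of length `n`.
def pathCount (n k i : ℕ) : ℕ :=
  #{f : Fin n → Bool | prefixTrue f n = k ∧ diagonalVisits f = i}

lemma nPaths_eq_pathCount (k l i : ℕ) : nPaths k l i = pathCount (k + l) k i := rfl

lemma diagonalVisits_snoc {n : ℕ} (g : Fin n → Bool) (b : Bool) :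
    diagonalVisits (Fin.snoc g b) =
      diagonalVisits g + if 2 * prefixTrue (Fin.snoc g b) (n + 1) = n + 1 then 1 else 0 := by
  unfold diagonalVisits
  rw [range_add_one, filter_insert,
    filter_congr fun t ht => by rw [prefixTrue_snoc_of_le g b (mem_range_succ_iff.1 ht)]]
  split_ifs with h₁ h₂ h₂
  · rw [card_insert_of_notMem (by simp)]
  · exact absurd h₁.2 h₂
  · exact absurd ⟨n.succ_pos, h₂⟩ h₁
  · rfl

lemma diagonalVisits_not {n : ℕ} (f : Fin n → Bool) :
    diagonalVisits (fun s => !f s) = diagonalVisits f := by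
  unfold diagonalVisits
  refine congrArg card (filter_congr fun t ht => ?_)
  have := prefixTrue_not_add f (mem_range_succ_iff.1 ht)
  omega

lemma pathCount_symm (n k i : ℕ) (hk : k ≤ n) : pathCount n (n - k) i = pathCount n k i := by
  refine card_nbij' (fun f s => !f s) (fun f s => !f s) ?_ ?_ ?_ ?_ <;>
    simp only [coe_filter, mem_univ, true_and, Set.MapsTo, Set.LeftInvOn,
      Set.mem_ofPred_eq, Bool.not_not, implies_true, diagonalVisits_not, and_imp]
  all_goals
    intro f hf hi
    have := prefixTrue_not_add f le_rfl
    exact ⟨by omega, hi⟩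

lemma pathCount_succ_succ (n k i : ℕ) :
    pathCount (n + 1) (k + 1) (i + if n + 1 = 2 * (k + 1) then 1 else 0) =
      pathCount n k i + pathCount n (k + 1) i := by
  have visits_snoc (g : Fin n → Bool) (b : Bool) (h : prefixTrue (Fin.snoc g b) (n + 1) = k + 1) :
      diagonalVisits (Fin.snoc g b) = i + (if n + 1 = 2 * (k + 1) then 1 else 0) ↔
        diagonalVisits g = i := by
    rw [diagonalVisits_snoc, h]
    split_ifs <;> omega
  unfold pathCount
  rw [card_filter_snoc]
  congr 1 <;> refine congrArg card (filter_congr fun g _ => ?_) <;>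
    rw [and_congr_right (visits_snoc g _), prefixTrue_snoc_last] <;> simp

lemma diagonalVisits_const_false (m : ℕ) : diagonalVisits (fun _ : Fin m => false) = 0 := by
  simpa [diagonalVisits, prefixTrue, filter_eq_empty_iff] using fun _ _ h => h.ne

lemma diagonalVisits_pos {n : ℕ} (f : Fin n → Bool) (hn : 0 < n) (h : 2 * prefixTrue f n = n) :
    0 < diagonalVisits f :=
  card_pos.2 ⟨n, mem_filter.2 ⟨self_mem_range_succ n, hn, h⟩⟩

lemma pathCount_zero (n i : ℕ) : pathCount n 0 i = if i = 0 then 1 else 0 := by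
  have visits_iff (f : Fin n → Bool) : (f = fun _ => false) ∧ diagonalVisits f = i ↔
      (f = fun _ => false) ∧ i = 0 :=
    and_congr_right fun h => by rw [h, diagonalVisits_const_false, eq_comm]
  unfold pathCount
  simp_rw [prefixTrue_eq_zero_iff, visits_iff]
  split_ifs with hi <;> simp [hi, filter_eq']

lemma pathCount_self (n i : ℕ) : pathCount n n i = if i = 0 then 1 else 0 := by
  rw [← pathCount_symm n n i le_rfl, Nat.sub_self, pathCount_zero]

lemma pathCount_two_mul_zero {k : ℕ} (hk : 0 < k) : pathCount (2 * k) k 0 = 0 := by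
  refine card_eq_zero.2 (filter_eq_empty_iff.2 fun f _ ⟨hf, hi⟩ => ?_)
  have := diagonalVisits_pos f (by omega) (by rw [hf])
  omega

-- `2 ^ i` times the ballot number `(a - b) / (a + b) * C(a + b, a)` with `a = k`, `b = n - k - i`.
def pathCountFormula (n k i : ℕ) : ℚ :=
  2 ^ i * (2 * k - n + i) * (n - i).choose k / (n - i : ℕ)

lemma pathCountFormula_self {n : ℕ} (hn : 1 ≤ n) (i : ℕ) :
    pathCountFormula n n i = if i = 0 then 1 else 0 := by
  rcases eq_or_ne i 0 with rfl | hi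
  · have : (n : ℚ) ≠ 0 := by positivity
    simp [pathCountFormula, two_mul, this]
  · simp [pathCountFormula, hi, Nat.choose_eq_zero_of_lt (show n - i < n by omega)]

lemma pathCountFormula_two_mul_zero (k : ℕ) : pathCountFormula (2 * k) k 0 = 0 := by
  simp [pathCountFormula]

lemma pathCountFormula_succ_succ_succ (n k i : ℕ) :
    pathCountFormula (n + 1) (k + 1) (i + 1) = 2 * pathCountFormula n (k + 1) i := by
  simp only [pathCountFormula, Nat.add_sub_add_right]
  push_cast
  ring

lemma pathCountFormula_succ_succ {k : ℕ} (hk : 1 ≤ k) (n i : ℕ) :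
    pathCountFormula (n + 1) (k + 1) i =
      pathCountFormula n k i + pathCountFormula n (k + 1) i := by
  rcases lt_or_ge n (k + i) with h | h
  · simp [pathCountFormula, Nat.choose_eq_zero_of_lt (show n - i < k by omega),
      Nat.choose_eq_zero_of_lt (show n + 1 - i < k + 1 by omega),
      Nat.choose_eq_zero_of_lt (show n - i < k + 1 by omega)]
  obtain ⟨m, rfl⟩ : ∃ m, n = m + i := ⟨n - i, by omega⟩
  have hkm : k ≤ m := by omega
  simp only [pathCountFormula, Nat.add_sub_cancel, show m + i + 1 - i = m + 1 by omega]
  have hm : (m : ℚ) ≠ 0 := Nat.cast_ne_zero.2 (by omega)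
  have h₁ : ((m + 1).choose (k + 1) : ℚ) = (m + 1) * m.choose k / (k + 1) := by
    rw [eq_div_iff (by positivity)]
    exact_mod_cast (Nat.add_one_mul_choose_eq m k).symm
  have h₂ : (m.choose (k + 1) : ℚ) = m.choose k * (m - k) / (k + 1) := by
    rw [eq_div_iff (by positivity), ← Nat.cast_sub hkm]
    exact_mod_cast Nat.choose_succ_right_eq m k
  push_cast
  rw [h₁, h₂]
  field_simp
  ring

theorem pathCount_eq_pathCountFormula (n : ℕ) :
    ∀ k i, 1 ≤ k → k ≤ n → n ≤ 2 * k → (pathCount n k i : ℚ) = pathCountFormula n k i := by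
  induction n with
  | zero => intro k i hk hkn _; omega
  | succ n ih =>
    rintro (_ | k) i hk hkn hnk
    · omega
    rcases hkn.eq_or_lt with hk_top | hkn
    · rw [hk_top, pathCount_self, pathCountFormula_self (by omega)]
      split_ifs <;> simp
    rcases (show n + 1 < 2 * (k + 1) ∨ n + 1 = 2 * (k + 1) by omega) with hoff | hdiag
    · have hrec := pathCount_succ_succ n k i
      rw [if_neg hoff.ne, add_zero] at hrec
      rw [hrec, Nat.cast_add, ih k i (by omega) (by omega) (by omega),
        ih (k + 1) i (by omega) (by omega) (by omega), pathCountFormula_succ_succ (by omega)]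
    cases i with
    | zero =>
      rw [hdiag, pathCount_two_mul_zero k.succ_pos, pathCountFormula_two_mul_zero, Nat.cast_zero]
    | succ i =>
      have hrec := pathCount_succ_succ n k i
      rw [if_pos hdiag] at hrec
      have hsymm : pathCount n k i = pathCount n (k + 1) i := by
        rw [← pathCount_symm n (k + 1) i (by omega), show n - (k + 1) = k by omega]
      rw [hrec, hsymm, pathCountFormula_succ_succ_succ,
        ← ih (k + 1) i (by omega) (by omega) (by omega)]
      push_cast
      ring

/-- The number of lattice paths from (0,0) to (k,k) passing through exactly `i` diagonal
points `(j,j)` with `j > 0` equals `i·2^i·C(2k-i,k)/(2k-i)`, for `1 ≤ i ≤ k`. -/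
theorem grand_dyck_count (k i : ℕ) (h1 : 1 ≤ i) (h2 : i ≤ k) :
    (nPaths k k i : ℚ) = (i : ℚ) * 2 ^ i * (Nat.choose (2 * k - i) k : ℚ) / ((2 * k - i : ℕ) : ℚ) := by
  calc (nPaths k k i : ℚ) = pathCountFormula (k + k) k i := by
        rw [nPaths_eq_pathCount]
        exact pathCount_eq_pathCountFormula (k + k) k i (by omega) (by omega) (by omega)
    _ = _ := by
      rw [pathCountFormula, ← two_mul]
      push_cast
      ring
end

section
/- The explicit formula n(k,ℓ;i) = (|k-ℓ|+i)·2^i·C(k+ℓ-i,k)/(k+ℓ-i) satisfies the path-counting recursion: for k = ℓ > 0, n(k,k;i) = n(k-1,k;i-1) + n(k,k-1;i-1), and for k ≠ ℓ with k,ℓ > 0, n(k,ℓ;i) = n(k-1,ℓ;i) + n(k,ℓ-1;i). -/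
/-!
With `N = k + ℓ - i` and `k ≥ ℓ`, the factor `|k - ℓ| + i` equals `2k - N`, and the absorption
identity `k·C(N,k) = N·C(N-1,k-1)` turns `(2k - N)·C(N,k)/N` into the ballot-type difference
`C(N-1,k-1) - C(N-1,k)`. In this form the off-diagonal recursion is Pascal's rule applied to both
binomials, and the diagonal recursion is the symmetry `n(k-1,k;i) = n(k,k-1;i)`.
-/

/-- The explicit formula `n(k,ℓ;i) = (|k-ℓ|+i)·2^i·C(k+ℓ-i,k)/(k+ℓ-i)` for
`i ≤ min(k,ℓ)`, extended by `0` for `i > min(k,ℓ)`.  The binomial `C(k+ℓ-i,k)` is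
written in the paper under the convention `k ≥ ℓ`; the definition is extended to
`k < ℓ` by the symmetry `n(k,ℓ;i) = n(ℓ,k;i)`, i.e. using `C(k+ℓ-i, max k ℓ)`. -/
noncomputable def nFormula (k l i : ℕ) : ℚ :=
  if i ≤ min k l then
    ((max k l - min k l + i : ℕ) : ℚ) * 2 ^ i * (Nat.choose (k + l - i) (max k l) : ℚ)
      / ((k + l - i : ℕ) : ℚ)
  else 0

theorem Nat.cast_choose_sub_cast_choose_succ (n k : ℕ) :
    (n.choose k : ℚ) - n.choose (k + 1) =
      (2 * (k + 1) - (n + 1)) * (n + 1).choose (k + 1) / (n + 1) := by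
  have absorb : ((n + 1).choose (k + 1) : ℚ) * (k + 1) = (n + 1) * n.choose k := by
    exact_mod_cast (Nat.add_one_mul_choose_eq n k).symm
  rw [Nat.choose_succ_succ', Nat.cast_add] at *
  field_simp
  linear_combination (-2 : ℚ) * absorb

lemma nFormula_comm (k l i : ℕ) : nFormula k l i = nFormula l k i := by
  rw [nFormula, nFormula, max_comm, min_comm, add_comm k l]

noncomputable def ballotForm (k l i : ℕ) : ℚ :=
  2 ^ i * ((Nat.choose (k + l - i - 1) (k - 1) : ℚ) - Nat.choose (k + l - i - 1) k)

lemma nFormula_eq_ballotForm {k l i : ℕ} (hk : 0 < k) (hlk : l ≤ k) (hi : i ≤ l) :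
    nFormula k l i = ballotForm k l i := by
  obtain ⟨a, rfl⟩ : ∃ a, k = a + 1 := ⟨k - 1, by omega⟩
  obtain ⟨n, hn⟩ : ∃ n, a + 1 + l - i = n + 1 := ⟨a + l - i, by omega⟩
  have hfactor : ((max (a + 1) l - min (a + 1) l + i : ℕ) : ℚ) = 2 * (a + 1) - (n + 1) := by
    rw [max_eq_left hlk, min_eq_right hlk, Nat.cast_add, Nat.cast_sub hlk]
    have : ((a + 1 + l - i : ℕ) : ℚ) = (n + 1 : ℕ) := congrArg _ hn
    push_cast [Nat.cast_sub (by omega : i ≤ a + 1 + l)] at this ⊢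
    linarith
  rw [nFormula, if_pos (le_min (by omega) hi), hfactor, max_eq_left hlk, ballotForm, hn,
    Nat.add_sub_cancel, Nat.add_sub_cancel, Nat.cast_choose_sub_cast_choose_succ]
  push_cast
  ring

lemma ballotForm_succ_eq_zero {k l : ℕ} (hlk : l + 1 < k) : ballotForm k l (l + 1) = 0 := by
  have hlt : k + l - (l + 1) - 1 < k - 1 := by omega
  rw [ballotForm, Nat.choose_eq_zero_of_lt hlt,
    Nat.choose_eq_zero_of_lt (hlt.trans_le (Nat.sub_le k 1))]
  simp

lemma nFormula_eq_ballotForm_of_succ_lt {k l i : ℕ} (hlk : l + 1 < k) (hi : i ≤ l + 1) :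
    nFormula k l i = ballotForm k l i := by
  rcases hi.lt_or_eq with hi | rfl
  · exact nFormula_eq_ballotForm (by omega) (by omega) (by omega)
  · rw [ballotForm_succ_eq_zero hlk, nFormula, if_neg (by omega)]

lemma ballotForm_pascal {k l i : ℕ} (hk : 1 < k) (hl : 0 < l) (hi : i + 2 ≤ k + l) :
    ballotForm k l i = ballotForm (k - 1) l i + ballotForm k (l - 1) i := by
  obtain ⟨a, rfl⟩ : ∃ a, k = a + 2 := ⟨k - 2, by omega⟩
  obtain ⟨n, hn⟩ : ∃ n, a + 2 + l - i - 1 = n + 1 := ⟨a + l - i, by omega⟩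
  have hn₁ : a + 1 + l - i - 1 = n := by omega
  have hn₂ : a + 2 + (l - 1) - i - 1 = n := by omega
  simp only [ballotForm, show a + 2 - 1 = a + 1 from rfl, Nat.add_sub_cancel]
  rw [hn, hn₁, hn₂, Nat.choose_succ_succ', Nat.choose_succ_succ' n (a + 1), Nat.cast_add,
    Nat.cast_add]
  ring

lemma nFormula_recursion_of_lt {k l : ℕ} (hl : 0 < l) (hlk : l < k) (i : ℕ) :
    nFormula k l i = nFormula (k - 1) l i + nFormula k (l - 1) i := by
  rcases le_or_gt i l with hi | hi
  · rw [nFormula_eq_ballotForm (by omega) hlk.le hi,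
      nFormula_eq_ballotForm (by omega) (by omega) hi,
      nFormula_eq_ballotForm_of_succ_lt (by omega) (by omega)]
    exact ballotForm_pascal (by omega) hl (by omega)
  · rw [nFormula, nFormula, nFormula, if_neg (by omega), if_neg (by omega), if_neg (by omega),
      add_zero]

lemma nFormula_diag_succ {k : ℕ} (hk : 0 < k) (i : ℕ) :
    nFormula k k (i + 1) = 2 * nFormula k (k - 1) i := by
  rcases le_or_gt (i + 1) k with hi | hi
  · rw [nFormula_eq_ballotForm hk le_rfl hi, nFormula_eq_ballotForm hk (by omega) (by omega),
      ballotForm, ballotForm, show k + k - (i + 1) - 1 = k + (k - 1) - i - 1 by omega, pow_succ]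
    ring
  · rw [nFormula, nFormula, if_neg (by omega), if_neg (by omega), mul_zero]

/-- The explicit formula satisfies the path-counting recursion: on the diagonal
(`k = ℓ > 0`) the index `i` is decremented, and off the diagonal (`k ≠ ℓ`, `k,ℓ > 0`)
it is preserved. -/
theorem nFormula_recursion :
    (∀ k : ℕ, 0 < k → ∀ i : ℕ,
        nFormula k k (i + 1) = nFormula (k - 1) k i + nFormula k (k - 1) i) ∧
    (∀ k l : ℕ, 0 < k → 0 < l → k ≠ l → ∀ i : ℕ,
        nFormula k l i = nFormula (k - 1) l i + nFormula k (l - 1) i) := by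
  refine ⟨fun k hk i => ?_, fun k l hk hl hne i => ?_⟩
  · rw [nFormula_diag_succ hk, nFormula_comm (k - 1), two_mul]
  · rcases hne.lt_or_gt with hkl | hlk
    · rw [nFormula_comm k, nFormula_comm (k - 1), nFormula_comm k (l - 1),
        nFormula_recursion_of_lt hk hkl, add_comm]
    · exact nFormula_recursion_of_lt hl hlk i
end

section
/- For the Markov chain with transition rates q((k,ℓ),(k+1,ℓ)) = λ₁, q((k,ℓ),(k,ℓ+1)) = λ₂ for all k,ℓ ≥ 0, and q((k,ℓ),(0,0)) = μ for k ≠ ℓ, the measure π(k,ℓ) = λ₁^k λ₂^ℓ · Σ_{i=0}^{min(k,ℓ)} (|k-ℓ|+i)·2^i·C(k+ℓ-i,k) / [(k+ℓ-i)(λ₁+λ₂)^i (λ₁+λ₂+μ)^{k+ℓ-i}] (with π(0,0)=1) satisfies the global balance equations: π(0,0)(λ₁+λ₂) = μ·Σ_{k≠ℓ} π(k,ℓ); for k ≠ ℓ, π(k,ℓ)(λ₁+λ₂+μ) = π(k-1,ℓ)λ₁·1(k>0) + π(k,ℓ-1)λ₂·1(ℓ>0); and for k = ℓ ≥ 1,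 π(k,k)(λ₁+λ₂) = π(k-1,k)λ₁ + π(k,k-1)λ₂. -/
open scoped BigOperators

/-- The candidate stationary measure
`π(k,ℓ) = λ₁^k λ₂^ℓ Σ_{i=0}^{min(k,ℓ)} (|k-ℓ|+i)·2^i·C(k+ℓ-i,k) /
  [(k+ℓ-i)(λ₁+λ₂)^i (λ₁+λ₂+μ)^{k+ℓ-i}]`, normalised so that `π(0,0) = 1`.
The binomial `C(k+ℓ-i,k)` is written in the paper under the convention `k ≥ ℓ` and is
extended symmetrically (`n(k,ℓ;i) = n(ℓ,k;i)`), i.e. as `C(k+ℓ-i, max k ℓ)`. -/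
noncomputable def piMeasure (l1 l2 mu : ℝ) (k l : ℕ) : ℝ :=
  if k = 0 ∧ l = 0 then 1
  else
    l1 ^ k * l2 ^ l *
      ∑ i ∈ Finset.range (min k l + 1),
        ((max k l - min k l + i : ℕ) : ℝ) * 2 ^ i * (Nat.choose (k + l - i) (max k l) : ℝ) /
          (((k + l - i : ℕ) : ℝ) * (l1 + l2) ^ i * (l1 + l2 + mu) ^ (k + l - i))

/-!
For `k ≥ ℓ` the coefficient `(k-ℓ+i) C(k+ℓ-i,k) / (k+ℓ-i)` in `π(k,ℓ)` is a ballot number. Ballot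
numbers obey Pascal's rule, which is the balance equation off the diagonal, and vanish on the
diagonal. At a diagonal state the two neighbours contribute equally (`π` is symmetric under
`λ₁ ↔ λ₂`), and this is what the weights `(2/(λ₁+λ₂))^i` account for.

The balance equation at the origin follows from the others alone. Summing the local equations over
the antidiagonal `k + ℓ = n + 1` gives `(λ₁+λ₂) sₙ₊₁ + μ oₙ₊₁ = (λ₁+λ₂) sₙ`, where `sₙ` and `oₙ`
are the total and the off-diagonal mass of level `n`. Odd levels have no diagonal state, so `s`
decreases by the factor `(λ₁+λ₂)/(λ₁+λ₂+μ)` every two levels, which makes `π` summable; summing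
the level identity over `n` then leaves `μ Σ oₙ = (λ₁+λ₂) s₀`.
-/

open Finset

/-- For `j ≤ k + 1`, `ballot k j = (k+1-j)/(k+1+j) · C(k+1+j, j)` is the number of lattice paths
from the origin to `(k+1, j)` that stay strictly below the diagonal after the first step. -/
def ballot (k j : ℕ) : ℤ := (k + j).choose k - (k + j).choose (k + 1)

@[simp] lemma ballot_zero_right (k : ℕ) : ballot k 0 = 1 := by
  simp [ballot]

lemma ballot_self_succ (k : ℕ) : ballot k (k + 1) = 0 := by
  rw [ballot, show k + (k + 1) = 2 * k + 1 by ring, Nat.choose_symm_half, sub_self]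

lemma ballot_succ_succ (k j : ℕ) :
    ballot (k + 1) (j + 1) = ballot k (j + 1) + ballot (k + 1) j := by
  simp only [ballot, show k + 1 + (j + 1) = k + j + 1 + 1 by ring,
    show k + (j + 1) = k + j + 1 by ring, show k + 1 + j = k + j + 1 by ring,
    Nat.choose_succ_succ' (k + j + 1)]
  push_cast
  ring

lemma ballot_eq_div {K : Type*} [Field K] [CharZero K] {k j : ℕ} (hj : j ≤ k + 1) :
    (ballot k j : K) =
      ((k + 1 - j : ℕ) : K) * (k + 1 + j).choose (k + 1) / ((k + 1 + j : ℕ) : K) := by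
  have hk : ((k + j + 1 : ℕ) : K) * (k + j).choose k = (k + j + 1).choose (k + 1) * (k + 1) := by
    exact_mod_cast Nat.add_one_mul_choose_eq (k + j) k
  have hj' : ((k + j).choose (k + 1) : K) * (k + j + 1 : ℕ) = (k + j + 1).choose (k + 1) * j := by
    have := Nat.choose_mul_succ_eq (k + j) (k + 1)
    rw [show k + j + 1 - (k + 1) = j by omega] at this
    exact_mod_cast this
  rw [eq_div_iff (Nat.cast_ne_zero.2 (by omega)), ballot, show k + 1 + j = k + j + 1 by ring]
  push_cast [hj] at hk hj' ⊢
  linear_combination hk - hj'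

section BallotSum

variable {R : Type*} [CommRing R]

def ballotSum (x y : R) (k l : ℕ) : R :=
  ∑ p ∈ antidiagonal l, (ballot k p.2 : R) * x ^ p.1 * y ^ (k + 1 + p.2)

lemma ballotSum_zero_zero (x y : R) : ballotSum x y 0 0 = y := by
  simp [ballotSum]

lemma ballotSum_succ_zero (x y : R) (k : ℕ) :
    ballotSum x y (k + 1) 0 = y * ballotSum x y k 0 := by
  simp only [ballotSum, HasAntidiagonal.antidiagonal_zero, sum_singleton, ballot_zero_right,
    Int.cast_one, pow_zero, mul_one]
  ring

lemma ballotSum_succ_succ (x y : R) (k l : ℕ) :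
    ballotSum x y (k + 1) (l + 1) = y * (ballotSum x y k (l + 1) + ballotSum x y (k + 1) l) := by
  simp only [ballotSum, Nat.sum_antidiagonal_succ', ballot_zero_right, ballot_succ_succ,
    Int.cast_add, add_mul, sum_add_distrib, mul_add, mul_sum, ← add_assoc]
  congr 1
  congr 1
  · simp only [Int.cast_one]
    ring
  all_goals exact sum_congr rfl fun p _ => by ring

lemma ballotSum_self_succ (x y : R) (k : ℕ) : ballotSum x y k (k + 1) = x * ballotSum x y k k := by
  simp only [ballotSum, Nat.sum_antidiagonal_succ, ballot_self_succ, mul_sum, Int.cast_zero,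
    zero_mul, zero_add]
  exact sum_congr rfl fun p _ => by ring

end BallotSum

theorem HasSum.sum_antidiagonal {α : Type*} [AddCommMonoid α] [TopologicalSpace α]
    [ContinuousAdd α] [RegularSpace α] {F : ℕ × ℕ → α} {a : α} (h : HasSum F a) :
    HasSum (fun n => ∑ p ∈ antidiagonal n, F p) a :=
  HasSum.sigma (HasAntidiagonal.sigmaAntidiagonalEquivProd.hasSum_iff.2 h)
    fun n => (antidiagonal n).hasSum F

theorem summable_of_summable_sum_antidiagonal {F : ℕ × ℕ → ℝ} (hF : 0 ≤ F)
    (h : Summable fun n => ∑ p ∈ antidiagonal n, F p) : Summable F := by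
  rw [← HasAntidiagonal.sigmaAntidiagonalEquivProd.summable_iff, Function.comp_def,
    summable_sigma_of_nonneg fun _ => hF _]
  exact ⟨fun n => (antidiagonal n).summable F, by
    simpa only [HasAntidiagonal.sigmaAntidiagonalEquivProd_apply, Finset.tsum_subtype] using h⟩

def levelSum (f : ℕ → ℕ → ℝ) (n : ℕ) : ℝ := ∑ p ∈ antidiagonal n, f p.1 p.2

def offDiagPart (f : ℕ → ℕ → ℝ) (k l : ℕ) : ℝ := if k ≠ l then f k l else 0

@[simp] lemma levelSum_zero (f : ℕ → ℕ → ℝ) : levelSum f 0 = f 0 0 := by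
  simp [levelSum]

lemma levelSum_nonneg {f : ℕ → ℕ → ℝ} (hf : ∀ k l, 0 ≤ f k l) (n : ℕ) : 0 ≤ levelSum f n :=
  sum_nonneg fun p _ => hf p.1 p.2

lemma offDiagPart_nonneg {f : ℕ → ℕ → ℝ} (hf : ∀ k l, 0 ≤ f k l) (k l : ℕ) :
    0 ≤ offDiagPart f k l := by
  unfold offDiagPart
  split_ifs <;> simp [hf]

lemma offDiagPart_le {f : ℕ → ℕ → ℝ} (hf : ∀ k l, 0 ≤ f k l) (k l : ℕ) :
    offDiagPart f k l ≤ f k l := by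
  unfold offDiagPart
  split_ifs <;> simp [hf]

lemma levelSum_offDiagPart_odd (f : ℕ → ℕ → ℝ) (m : ℕ) :
    levelSum (offDiagPart f) (2 * m + 1) = levelSum f (2 * m + 1) :=
  sum_congr rfl fun p hp => if_pos (by have := mem_antidiagonal.1 hp; omega)

structure IsBalancedOffOrigin (f : ℕ → ℕ → ℝ) (a b μ : ℝ) : Prop where
  off_diag : ∀ k l, k ≠ l → f k l * (a + b + μ) =
    (if 0 < k then f (k - 1) l * a else 0) + (if 0 < l then f k (l - 1) * b else 0)
  diag : ∀ k, 1 ≤ k → f k k * (a + b) = f (k - 1) k * a + f k (k - 1) * b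

namespace IsBalancedOffOrigin

variable {f : ℕ → ℕ → ℝ} {a b μ : ℝ}

lemma balance (h : IsBalancedOffOrigin f a b μ) {k l : ℕ} (hkl : k + l ≠ 0) :
    (a + b) * f k l + μ * offDiagPart f k l =
      (if 0 < k then f (k - 1) l * a else 0) + (if 0 < l then f k (l - 1) * b else 0) := by
  by_cases hk : k = l
  · subst hk
    rw [offDiagPart, if_neg (not_not.2 rfl), if_pos (by omega), if_pos (by omega),
      ← h.diag k (by omega)]
    ring
  · rw [offDiagPart, if_pos hk, ← h.off_diag k l hk]
    ring

lemma levelSum_succ (h : IsBalancedOffOrigin f a b μ) (n : ℕ) :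
    (a + b) * levelSum f (n + 1) + μ * levelSum (offDiagPart f) (n + 1) =
      (a + b) * levelSum f n := by
  calc (a + b) * levelSum f (n + 1) + μ * levelSum (offDiagPart f) (n + 1)
      = ∑ p ∈ antidiagonal (n + 1), ((a + b) * f p.1 p.2 + μ * offDiagPart f p.1 p.2) := by
        simp only [levelSum, sum_add_distrib, mul_sum]
    _ = ∑ p ∈ antidiagonal (n + 1), (if 0 < p.1 then f (p.1 - 1) p.2 * a else 0) +
          ∑ p ∈ antidiagonal (n + 1), (if 0 < p.2 then f p.1 (p.2 - 1) * b else 0) := by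
        rw [← sum_add_distrib]
        exact sum_congr rfl fun p hp => h.balance (by rw [mem_antidiagonal.1 hp]; omega)
    _ = (a + b) * levelSum f n := by
        rw [Nat.sum_antidiagonal_succ, Nat.sum_antidiagonal_succ']
        simp only [lt_self_iff_false, ↓reduceIte, lt_add_iff_pos_left, Order.lt_add_one_iff,
          zero_le, add_tsub_cancel_right, ← sum_mul, zero_add, levelSum]
        ring

lemma levelSum_succ_le (h : IsBalancedOffOrigin f a b μ) (hf : ∀ k l, 0 ≤ f k l)
    (hab : 0 < a + b) (hμ : 0 ≤ μ) (n : ℕ) : levelSum f (n + 1) ≤ levelSum f n := by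
  have hlevel := h.levelSum_succ n
  have := mul_nonneg hμ (levelSum_nonneg (offDiagPart_nonneg hf) (n + 1))
  exact le_of_mul_le_mul_left (by linarith) hab

lemma levelSum_two_mul_add_two_le (h : IsBalancedOffOrigin f a b μ) (hf : ∀ k l, 0 ≤ f k l)
    (hab : 0 < a + b) (hμ : 0 ≤ μ) (m : ℕ) :
    levelSum f (2 * m + 2) ≤ (a + b) / (a + b + μ) * levelSum f (2 * m) := by
  have hodd := h.levelSum_succ (2 * m)
  rw [levelSum_offDiagPart_odd] at hodd
  have hle := h.levelSum_succ_le hf hab hμ (2 * m + 1)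
  rw [div_mul_eq_mul_div, le_div_iff₀ (by linarith)]
  nlinarith

lemma levelSum_two_mul_le (h : IsBalancedOffOrigin f a b μ) (hf : ∀ k l, 0 ≤ f k l)
    (hab : 0 < a + b) (hμ : 0 ≤ μ) (m : ℕ) :
    levelSum f (2 * m) ≤ ((a + b) / (a + b + μ)) ^ m * f 0 0 := by
  induction m with
  | zero => simp
  | succ m ih =>
    calc levelSum f (2 * (m + 1)) ≤ (a + b) / (a + b + μ) * levelSum f (2 * m) :=
          h.levelSum_two_mul_add_two_le hf hab hμ m
      _ ≤ (a + b) / (a + b + μ) * (((a + b) / (a + b + μ)) ^ m * f 0 0) := by gcongr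
      _ = ((a + b) / (a + b + μ)) ^ (m + 1) * f 0 0 := by ring

lemma summable (h : IsBalancedOffOrigin f a b μ) (hf : ∀ k l, 0 ≤ f k l)
    (hab : 0 < a + b) (hμ : 0 < μ) : Summable (Function.uncurry f) := by
  set r := (a + b) / (a + b + μ)
  have hr : r < 1 := (div_lt_one (by linarith)).2 (by linarith)
  have hgeom : Summable fun m : ℕ => r ^ m * f 0 0 :=
    (summable_geometric_of_lt_one (by positivity) hr).mul_right _
  have heven : ∀ m, levelSum f (2 * m) ≤ r ^ m * f 0 0 := h.levelSum_two_mul_le hf hab hμ.le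
  refine summable_of_summable_sum_antidiagonal (fun p => hf p.1 p.2) (Summable.even_add_odd ?_ ?_)
  · exact hgeom.of_nonneg_of_le (fun m => levelSum_nonneg hf _) heven
  · exact hgeom.of_nonneg_of_le (fun m => levelSum_nonneg hf _)
      fun m => (h.levelSum_succ_le hf hab hμ.le _).trans (heven m)

theorem balance_origin (h : IsBalancedOffOrigin f a b μ) (hf : ∀ k l, 0 ≤ f k l)
    (hab : 0 < a + b) (hμ : 0 < μ) :
    f 0 0 * (a + b) = μ * ∑' p : ℕ × ℕ, if p.1 ≠ p.2 then f p.1 p.2 else 0 := by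
  have hF := h.summable hf hab hμ
  have hG : Summable (Function.uncurry (offDiagPart f)) :=
    hF.of_nonneg_of_le (fun p => offDiagPart_nonneg hf p.1 p.2) fun p => offDiagPart_le hf p.1 p.2
  have hs : HasSum (levelSum f) (∑' p, Function.uncurry f p) := hF.hasSum.sum_antidiagonal
  have ho : HasSum (levelSum (offDiagPart f)) (∑' p, Function.uncurry (offDiagPart f) p) :=
    hG.hasSum.sum_antidiagonal
  have hshifted := (((hasSum_nat_add_iff' 1).2 hs).mul_left (a + b)).add
    (((hasSum_nat_add_iff' 1).2 ho).mul_left μ)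
  simp only [h.levelSum_succ] at hshifted
  have hsums := hshifted.unique (hs.mul_left (a + b))
  simp only [range_one, sum_singleton, levelSum_zero, offDiagPart, ne_eq, not_true_eq_false,
    if_false] at hsums
  change f 0 0 * (a + b) = μ * ∑' p, Function.uncurry (offDiagPart f) p
  linear_combination -hsums

end IsBalancedOffOrigin

lemma piMeasure_nonneg {l1 l2 mu : ℝ} (h1 : 0 ≤ l1) (h2 : 0 ≤ l2) (hmu : 0 ≤ mu) (k l : ℕ) :
    0 ≤ piMeasure l1 l2 mu k l := by
  unfold piMeasure
  split_ifs
  · exact zero_le_one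
  · positivity

lemma piMeasure_comm (l1 l2 mu : ℝ) (k l : ℕ) :
    piMeasure l1 l2 mu k l = piMeasure l2 l1 mu l k := by
  simp only [piMeasure, and_comm, min_comm l k, max_comm l k, add_comm l k, add_comm l2 l1,
    mul_comm (l2 ^ l)]

lemma piMeasure_zero_zero (l1 l2 mu : ℝ) : piMeasure l1 l2 mu 0 0 = 1 := by
  simp [piMeasure]

lemma piMeasure_succ_eq_ballotSum (l1 l2 mu : ℝ) {k l : ℕ} (hl : l ≤ k + 1) :
    piMeasure l1 l2 mu (k + 1) l =
      l1 ^ (k + 1) * l2 ^ l * ballotSum (2 / (l1 + l2)) (l1 + l2 + mu)⁻¹ k l := by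
  rw [piMeasure, if_neg (by omega), min_eq_right hl, max_eq_left hl, ballotSum,
    Nat.sum_antidiagonal_eq_sum_range_succ_mk]
  congr 1
  refine sum_congr rfl fun i hi => ?_
  obtain ⟨j, rfl⟩ : ∃ j, l = i + j := ⟨l - i, by grind⟩
  rw [show k + 1 - (i + j) + i = k + 1 - j by omega, show k + 1 + (i + j) - i = k + 1 + j by omega,
    show i + j - i = j by omega, ballot_eq_div (by omega)]
  simp only [div_eq_mul_inv, mul_inv, mul_pow, inv_pow]
  ring

lemma piMeasure_balance_of_lt {l1 l2 mu : ℝ} (hs : l1 + l2 + mu ≠ 0) {k l : ℕ} (hlk : l < k) :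
    piMeasure l1 l2 mu k l * (l1 + l2 + mu) =
      piMeasure l1 l2 mu (k - 1) l * l1 +
        (if 0 < l then piMeasure l1 l2 mu k (l - 1) * l2 else 0) := by
  set A := ballotSum (2 / (l1 + l2)) (l1 + l2 + mu)⁻¹
  have hys : (l1 + l2 + mu)⁻¹ * (l1 + l2 + mu) = 1 := inv_mul_cancel₀ hs
  obtain ⟨_ | k, rfl⟩ : ∃ m, k = m + 1 := ⟨k - 1, by omega⟩
  · obtain rfl : l = 0 := by omega
    rw [piMeasure_succ_eq_ballotSum _ _ _ (by omega), ballotSum_zero_zero, piMeasure_zero_zero]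
    simp only [lt_self_iff_false, if_false]
    linear_combination l1 * hys
  rcases l with _ | l
  · simp only [lt_self_iff_false, if_false, Nat.add_sub_cancel]
    rw [piMeasure_succ_eq_ballotSum _ _ _ (by omega), piMeasure_succ_eq_ballotSum _ _ _ (by omega),
      ballotSum_succ_zero]
    linear_combination (l1 ^ (k + 2) * A k 0) * hys
  · simp only [Nat.zero_lt_succ, if_true, Nat.add_sub_cancel]
    rw [piMeasure_succ_eq_ballotSum _ _ _ (by omega), piMeasure_succ_eq_ballotSum _ _ _ (by omega),
      piMeasure_succ_eq_ballotSum _ _ _ (by omega), ballotSum_succ_succ]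
    linear_combination (l1 ^ (k + 2) * l2 ^ (l + 1) * (A k (l + 1) + A (k + 1) l)) * hys

lemma piMeasure_balance_of_ne {l1 l2 mu : ℝ} (hs : l1 + l2 + mu ≠ 0) {k l : ℕ} (hkl : k ≠ l) :
    piMeasure l1 l2 mu k l * (l1 + l2 + mu) =
      (if 0 < k then piMeasure l1 l2 mu (k - 1) l * l1 else 0) +
        (if 0 < l then piMeasure l1 l2 mu k (l - 1) * l2 else 0) := by
  rcases hkl.lt_or_gt with hkl | hlk
  · have h := piMeasure_balance_of_lt (l1 := l2) (l2 := l1) (mu := mu) (by rwa [add_comm l2]) hkl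
    simp only [← piMeasure_comm, add_comm l2 l1] at h
    rw [if_pos (by omega : 0 < l), h, add_comm]
  · rw [if_pos (by omega : 0 < k)]
    exact piMeasure_balance_of_lt hs hlk

lemma piMeasure_balance_diag {l1 l2 mu : ℝ} (hΛ : l1 + l2 ≠ 0) {k : ℕ} (hk : 1 ≤ k) :
    piMeasure l1 l2 mu k k * (l1 + l2) =
      piMeasure l1 l2 mu (k - 1) k * l1 + piMeasure l1 l2 mu k (k - 1) * l2 := by
  set A := ballotSum (2 / (l1 + l2)) (l1 + l2 + mu)⁻¹
  obtain ⟨k, rfl⟩ : ∃ m, k = m + 1 := ⟨k - 1, by omega⟩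
  rw [Nat.add_sub_cancel, piMeasure_comm l1 l2 mu k, piMeasure_succ_eq_ballotSum _ _ _ le_rfl,
    piMeasure_succ_eq_ballotSum _ _ _ (by omega), piMeasure_succ_eq_ballotSum _ _ _ (by omega),
    ballotSum_self_succ, add_comm l2 l1]
  have hx : 2 / (l1 + l2) * (l1 + l2) = 2 := div_mul_cancel₀ 2 hΛ
  linear_combination (l1 ^ (k + 1) * l2 ^ (k + 1) * A k k) * hx

/-- The measure `π` satisfies the global balance equations of the Markov chain with
rates `q((k,ℓ),(k+1,ℓ)) = λ₁`, `q((k,ℓ),(k,ℓ+1)) = λ₂` and `q((k,ℓ),(0,0)) = μ`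
for `k ≠ ℓ`. -/
theorem piMeasure_balance (l1 l2 mu : ℝ) (h1 : 0 < l1) (h2 : 0 < l2) (hmu : 0 < mu) :
    (piMeasure l1 l2 mu 0 0 * (l1 + l2) =
      mu * ∑' p : ℕ × ℕ, if p.1 ≠ p.2 then piMeasure l1 l2 mu p.1 p.2 else 0) ∧
    (∀ k l : ℕ, k ≠ l →
      piMeasure l1 l2 mu k l * (l1 + l2 + mu) =
        (if 0 < k then piMeasure l1 l2 mu (k - 1) l * l1 else 0) +
        (if 0 < l then piMeasure l1 l2 mu k (l - 1) * l2 else 0)) ∧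
    (∀ k : ℕ, 1 ≤ k →
      piMeasure l1 l2 mu k k * (l1 + l2) =
        piMeasure l1 l2 mu (k - 1) k * l1 + piMeasure l1 l2 mu k (k - 1) * l2) := by
  have hΛ : 0 < l1 + l2 := by positivity
  have hbal : IsBalancedOffOrigin (piMeasure l1 l2 mu) l1 l2 mu :=
    ⟨fun _ _ hkl => piMeasure_balance_of_ne (by positivity) hkl,
      fun _ hk => piMeasure_balance_diag hΛ.ne' hk⟩
  exact ⟨hbal.balance_origin (piMeasure_nonneg h1.le h2.le hmu.le) hΛ hmu, hbal.off_diag, hbal.diag⟩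
end

section
/- Let K be a negative-binomial-type random variable: K is the number of failures before the z-th success in i.i.d. Bernoulli(p) trials, where p = λ₂/(λ₁+λ₂) with 0 < λ₁ < λ₂. Then the probability P_A = P(K ≥ z) + Σ_{k=0}^{z-1} P(K=k)·(λ₁/λ₂)^{z-k} satisfies P_A = 1 − Σ_{k=0}^{z} C(z+k−1, z−1)·(p^z (1−p)^k − p^k (1−p)^z). -/
/-!
Since `λ₁/λ₂ = (1 - p)/p`, the `k`-th catch-up term `p^z (1-p)^k (λ₁/λ₂)^(z-k)` equals
`p^k (1-p)^z`, and the `k = z` term of the right-hand sum vanishes, so both sides agree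
term by term.
-/

open Finset

section

variable {K : Type*} [Field K] {p : K} (q : K)

theorem pow_mul_pow_mul_div_pow_sub (hp : p ≠ 0) {k z : ℕ} (hkz : k ≤ z) :
    p ^ z * q ^ k * (q / p) ^ (z - k) = p ^ k * q ^ z := by
  obtain ⟨m, rfl⟩ := Nat.exists_eq_add_of_le hkz
  rw [Nat.add_sub_cancel_left, div_pow, pow_add, pow_add]
  field_simp

theorem one_sub_sum_add_sum_mul_div_pow_sub (c : ℕ → K) (hp : p ≠ 0) (z : ℕ) :
    (1 - ∑ k ∈ range z, c k * p ^ z * q ^ k)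
      + ∑ k ∈ range z, c k * p ^ z * q ^ k * (q / p) ^ (z - k)
    = 1 - ∑ k ∈ range (z + 1), c k * (p ^ z * q ^ k - p ^ k * q ^ z) := by
  have catch_up : ∀ k ∈ range z,
      c k * p ^ z * q ^ k * (q / p) ^ (z - k) = c k * (p ^ k * q ^ z) := fun k hk => by
    rw [mul_assoc (c k), mul_assoc (c k),
      pow_mul_pow_mul_div_pow_sub q hp (mem_range.mp hk).le]
  rw [sum_congr rfl catch_up, sum_range_succ, sub_self, mul_zero, add_zero]
  simp only [mul_sub, sum_sub_distrib, mul_assoc]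
  ring

theorem one_sub_div_add_div_div_add_eq_div {a b : K} (hb : b ≠ 0) (hab : a + b ≠ 0) :
    (1 - b / (a + b)) / (b / (a + b)) = a / b := by
  field_simp
  ring

end

theorem attack_probability_general (l1 l2 : ℝ) (h1 : 0 < l1) (h12 : l1 < l2) (z : ℕ) :
    (1 - ∑ k ∈ Finset.range z,
        (Nat.choose (z + k - 1) (z - 1) : ℝ) * (l2 / (l1 + l2)) ^ z * (1 - l2 / (l1 + l2)) ^ k)
      + ∑ k ∈ Finset.range z,
        (Nat.choose (z + k - 1) (z - 1) : ℝ) * (l2 / (l1 + l2)) ^ z * (1 - l2 / (l1 + l2)) ^ k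
          * (l1 / l2) ^ (z - k)
    = 1 - ∑ k ∈ Finset.range (z + 1),
        (Nat.choose (z + k - 1) (z - 1) : ℝ) *
          ((l2 / (l1 + l2)) ^ z * (1 - l2 / (l1 + l2)) ^ k
            - (l2 / (l1 + l2)) ^ k * (1 - l2 / (l1 + l2)) ^ z) := by
  have h2 : 0 < l2 := h1.trans h12
  rw [← one_sub_div_add_div_div_add_eq_div h2.ne' (by positivity)]
  exact one_sub_sum_add_sum_mul_div_pow_sub _ (fun k => (Nat.choose (z + k - 1) (z - 1) : ℝ))
    (by positivity) z

/-- Rosenfeld's corrected double-spend probability.  With `p = λ₂/(λ₁+λ₂)` and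
`P(K=k) = C(z+k-1, z-1) p^z (1-p)^k` the negative binomial probabilities,
`P_A = P(K ≥ z) + Σ_{k=0}^{z-1} P(K=k) (λ₁/λ₂)^{z-k}`
equals `1 - Σ_{k=0}^{z} C(z+k-1, z-1) (p^z (1-p)^k - p^k (1-p)^z)`. -/
theorem attack_probability (l1 l2 : ℝ) (h1 : 0 < l1) (h12 : l1 < l2) (z : ℕ) (hz : 1 ≤ z) :
    (1 - ∑ k ∈ Finset.range z,
        (Nat.choose (z + k - 1) (z - 1) : ℝ) * (l2 / (l1 + l2)) ^ z * (1 - l2 / (l1 + l2)) ^ k)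
      + ∑ k ∈ Finset.range z,
        (Nat.choose (z + k - 1) (z - 1) : ℝ) * (l2 / (l1 + l2)) ^ z * (1 - l2 / (l1 + l2)) ^ k
          * (l1 / l2) ^ (z - k)
    = 1 - ∑ k ∈ Finset.range (z + 1),
        (Nat.choose (z + k - 1) (z - 1) : ℝ) *
          ((l2 / (l1 + l2)) ^ z * (1 - l2 / (l1 + l2)) ^ k
            - (l2 / (l1 + l2)) ^ k * (1 - l2 / (l1 + l2)) ^ z) :=
  attack_probability_general l1 l2 h1 h12 z
end
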